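/- Let μ be a positive Radon measure on ℝⁿ, Q a dyadic cube, and f integrable, supported in Q with ∫f dμ = 0. For a dyadic cube J_p ⊂ Q with μ(J_p) ≠ 0 and center c, and a dyadic cube R with ℓ(J_p) < ℓ(R), define the localized difference Ĥ_R f = (Σ_{I∈ch(R)} ⟨f⟩_I χ_I(c))χ_Q − ⟨f⟩_R χ_R(c)χ_Q and the modified wavelet ψ^{full}_{I,J_p} = μ(I)^{1/2}(χ_I(c)/μ(I) − χ_{I_p}(c)/μ(I_p))χ_Q for μ(I)≠0 (and 0 otherwise). Then Ĥ_R f = Σ_{I∈ch(R)} ⟨f, ψ_I⟩ ψ^{full}_{I,J_p}, where ψ_I is the standard Haar wavelet. -/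

import Mathlib

open MeasureTheory
open scoped Classical ENNReal

noncomputable section

/-- The dyadic cube of scale `k` (side length `2^{-k}`) and position `j` in `ℝⁿ`. -/
def dyadicCube (n : ℕ) (k : ℤ) (j : Fin n → ℤ) : Set (EuclideanSpace ℝ (Fin n)) :=
  {x | ∀ i, (2:ℝ) ^ (-k) * (j i : ℝ) ≤ x i ∧ x i < (2:ℝ) ^ (-k) * ((j i : ℝ) + 1)}

/-- The position of the dyadic parent: the parent of the cube `(k, j)` is `(k-1, parentIdx j)`. -/
def parentIdx {n : ℕ} (j : Fin n → ℤ) : Fin n → ℤ := fun i => j i / 2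

/-- The Haar wavelet `ψ_I = μ(I)^{1/2} (μ(I)⁻¹ χ_I - μ(I_p)⁻¹ χ_{I_p})` associated with the
dyadic cube `I = (k, j)`, set to `0` when `μ(I) = 0`. -/
def haar (n : ℕ) (μ : Measure (EuclideanSpace ℝ (Fin n))) (k : ℤ) (j : Fin n → ℤ) :
    EuclideanSpace ℝ (Fin n) → ℝ := fun x =>
  if μ (dyadicCube n k j) = 0 then 0 else
    Real.sqrt (μ (dyadicCube n k j)).toReal *
      ((dyadicCube n k j).indicator (fun _ => (1:ℝ)) x / (μ (dyadicCube n k j)).toReal -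
       (dyadicCube n (k-1) (parentIdx j)).indicator (fun _ => (1:ℝ)) x /
         (μ (dyadicCube n (k-1) (parentIdx j))).toReal)


/-- The average `⟨f⟩_s = μ(s)⁻¹ ∫_s f dμ`, set to `0` when `μ(s) = 0`. -/
def avg (n : ℕ) (μ : Measure (EuclideanSpace ℝ (Fin n))) (s : Set (EuclideanSpace ℝ (Fin n)))
    (f : EuclideanSpace ℝ (Fin n) → ℝ) : ℝ :=
  if μ s = 0 then 0 else (∫ x in s, f x ∂μ) / (μ s).toReal

/-- The position of the child of the cube `(k, j)` selected by `b : Fin n → Bool`. -/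
def childIdx {n : ℕ} (j : Fin n → ℤ) (b : Fin n → Bool) : Fin n → ℤ :=
  fun i => 2 * j i + (if b i then 1 else 0)

/-- The center of the dyadic cube `(k, j)`. -/
def dyadicCtr (n : ℕ) (k : ℤ) (j : Fin n → ℤ) : EuclideanSpace ℝ (Fin n) :=
  WithLp.toLp 2 (fun i => (2:ℝ) ^ (-k) * ((j i : ℝ) + 1/2))

/-- The modified wavelet `ψ^{full}_{I,J_p}` associated with a child `I` of the dyadic cube
`R = (kR, jR)`, the point `c = c(J_p)` and the cube `Q`:
`ψ^{full}_{I,J_p} = μ(I)^{1/2} (χ_I(c)/μ(I) - χ_{I_p}(c)/μ(I_p)) χ_Q`, and `0` if `μ(I)=0`. -/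
def haarFull (n : ℕ) (μ : Measure (EuclideanSpace ℝ (Fin n))) (kR : ℤ) (jR : Fin n → ℤ)
    (b : Fin n → Bool) (c : EuclideanSpace ℝ (Fin n)) (Q : Set (EuclideanSpace ℝ (Fin n))) :
    EuclideanSpace ℝ (Fin n) → ℝ := fun x =>
  if μ (dyadicCube n (kR+1) (childIdx jR b)) = 0 then 0 else
    Real.sqrt (μ (dyadicCube n (kR+1) (childIdx jR b))).toReal *
      ((dyadicCube n (kR+1) (childIdx jR b)).indicator (fun _ => (1:ℝ)) c /
          (μ (dyadicCube n (kR+1) (childIdx jR b))).toReal -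
        (dyadicCube n kR jR).indicator (fun _ => (1:ℝ)) c / (μ (dyadicCube n kR jR)).toReal) *
      Q.indicator (fun _ => (1:ℝ)) x

/-- The localized difference
`Ĥ_R f = (Σ_{I ∈ ch(R)} ⟨f⟩_I χ_I(c)) χ_Q - ⟨f⟩_R χ_R(c) χ_Q`. -/
def localDiff (n : ℕ) (μ : Measure (EuclideanSpace ℝ (Fin n))) (kR : ℤ) (jR : Fin n → ℤ)
    (c : EuclideanSpace ℝ (Fin n)) (Q : Set (EuclideanSpace ℝ (Fin n)))
    (f : EuclideanSpace ℝ (Fin n) → ℝ) : EuclideanSpace ℝ (Fin n) → ℝ := fun x =>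
  (∑ b : Fin n → Bool,
      avg n μ (dyadicCube n (kR+1) (childIdx jR b)) f *
        (dyadicCube n (kR+1) (childIdx jR b)).indicator (fun _ => (1:ℝ)) c) *
      Q.indicator (fun _ => (1:ℝ)) x -
    avg n μ (dyadicCube n kR jR) f *
      (dyadicCube n kR jR).indicator (fun _ => (1:ℝ)) c * Q.indicator (fun _ => (1:ℝ)) x

/-!
On `R`, the product `⟨f, ψ_I⟩ ψ^{full}_{I,J_p}` equals
`μ(I) (⟨f⟩_I - ⟨f⟩_R) (χ_I(c)/μ(I) - 1/μ(R)) χ_Q`. Summed over the children `I` of `R`, the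
first part picks out the child `I₀ ∋ c` and gives `(⟨f⟩_{I₀} - ⟨f⟩_R) χ_Q = Ĥ_R f`, and the second
part vanishes because `⟨f⟩_R` is the `μ`-weighted mean of the `⟨f⟩_I`. Cancelling `μ(I₀)` needs
`μ(I₀) ≠ 0`, which holds because `J_p ⊆ I₀`: the cubes share the point `c` and `ℓ(J_p) ≤ ℓ(I₀)`.
-/

theorem floor_two_zpow_mul_eq_div {k k' : ℤ} (h : k' ≤ k) (t : ℝ) :
    ⌊(2:ℝ) ^ k' * t⌋ = ⌊(2:ℝ) ^ k * t⌋ / ((2 ^ (k - k').toNat : ℕ) : ℤ) := by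
  have hpow : (((2 ^ (k - k').toNat : ℕ) : ℝ)) = (2:ℝ) ^ (k - k') := by
    rw [Nat.cast_pow, Nat.cast_ofNat, ← zpow_natCast, Int.toNat_of_nonneg (by omega)]
  rw [← Int.floor_div_natCast, hpow, mul_div_right_comm, ← zpow_sub₀ two_ne_zero, sub_sub_cancel]

theorem floor_two_zpow_mul_eq_floor_succ_div_two (k : ℤ) (t : ℝ) :
    ⌊(2:ℝ) ^ k * t⌋ = ⌊(2:ℝ) ^ (k + 1) * t⌋ / 2 := by
  simpa using floor_two_zpow_mul_eq_div (le_add_of_nonneg_right zero_le_one) t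

section Dyadic

variable {n : ℕ}

theorem mem_dyadicCube_iff {k : ℤ} {j : Fin n → ℤ} {x : EuclideanSpace ℝ (Fin n)} :
    x ∈ dyadicCube n k j ↔ ∀ i, ⌊(2:ℝ) ^ k * x i⌋ = j i := by
  refine forall_congr' fun i => ?_
  have h2k : (0:ℝ) < 2 ^ k := zpow_pos two_pos k
  rw [Int.floor_eq_iff, zpow_neg, inv_mul_eq_div, inv_mul_eq_div, div_le_iff₀ h2k,
    lt_div_iff₀ h2k, mul_comm (x i)]

theorem dyadicCtr_mem (k : ℤ) (j : Fin n → ℤ) : dyadicCtr n k j ∈ dyadicCube n k j := by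
  refine mem_dyadicCube_iff.mpr fun i => ?_
  change ⌊(2:ℝ) ^ k * ((2:ℝ) ^ (-k) * ((j i : ℝ) + 1 / 2))⌋ = j i
  rw [← mul_assoc, ← zpow_add₀ two_ne_zero, add_neg_cancel, zpow_zero, one_mul,
    Int.floor_eq_iff]
  constructor <;> norm_num

theorem dyadicCube_subset_of_mem {k k' : ℤ} {j j' : Fin n → ℤ} (h : k' ≤ k)
    {x : EuclideanSpace ℝ (Fin n)} (hx : x ∈ dyadicCube n k j) (hx' : x ∈ dyadicCube n k' j') :
    dyadicCube n k j ⊆ dyadicCube n k' j' := by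
  intro y hy
  rw [mem_dyadicCube_iff] at hx hx' hy ⊢
  intro i
  rw [floor_two_zpow_mul_eq_div h, hy, ← hx, ← floor_two_zpow_mul_eq_div h, hx']

theorem disjoint_dyadicCube {k : ℤ} {j j' : Fin n → ℤ} (h : j ≠ j') :
    Disjoint (dyadicCube n k j) (dyadicCube n k j') :=
  Set.disjoint_left.mpr fun _ hx hx' => h <| funext fun i =>
    (mem_dyadicCube_iff.mp hx i).symm.trans (mem_dyadicCube_iff.mp hx' i)

theorem childIdx_injective (j : Fin n → ℤ) : Function.Injective (childIdx j) := by
  intro b b' h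
  funext i
  have hi := congrFun h i
  unfold childIdx at hi
  cases hb : b i <;> cases hb' : b' i <;> simp [hb, hb'] at hi ⊢

theorem parentIdx_childIdx (j : Fin n → ℤ) (b : Fin n → Bool) : parentIdx (childIdx j b) = j := by
  funext i
  unfold parentIdx childIdx
  cases b i <;> omega

theorem iUnion_dyadicCube_childIdx (k : ℤ) (j : Fin n → ℤ) :
    ⋃ b, dyadicCube n (k + 1) (childIdx j b) = dyadicCube n k j := by
  ext x
  simp only [Set.mem_iUnion, mem_dyadicCube_iff]
  constructor
  · rintro ⟨b, hb⟩ i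
    rw [floor_two_zpow_mul_eq_floor_succ_div_two, hb]
    exact congrFun (parentIdx_childIdx j b) i
  · intro hx
    refine ⟨fun i => decide (⌊(2:ℝ) ^ (k + 1) * x i⌋ % 2 = 1), fun i => ?_⟩
    have hi := hx i
    rw [floor_two_zpow_mul_eq_floor_succ_div_two] at hi
    unfold childIdx
    split_ifs with h <;> simp at h <;> omega

theorem dyadicCube_childIdx_subset (k : ℤ) (j : Fin n → ℤ) (b : Fin n → Bool) :
    dyadicCube n (k + 1) (childIdx j b) ⊆ dyadicCube n k j := by
  rw [← iUnion_dyadicCube_childIdx k j]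
  exact Set.subset_iUnion (fun b => dyadicCube n (k + 1) (childIdx j b)) b

theorem pairwise_disjoint_dyadicCube_childIdx (k : ℤ) (j : Fin n → ℤ) :
    Pairwise (Function.onFun Disjoint fun b => dyadicCube n (k + 1) (childIdx j b)) :=
  fun _ _ h => disjoint_dyadicCube ((childIdx_injective j).ne h)

theorem indicator_dyadicCube_childIdx_of_mem {k : ℤ} {j : Fin n → ℤ} {b₀ : Fin n → Bool}
    {c : EuclideanSpace ℝ (Fin n)} (hc : c ∈ dyadicCube n (k + 1) (childIdx j b₀))
    (b : Fin n → Bool) :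
    (dyadicCube n (k + 1) (childIdx j b)).indicator (fun _ => (1:ℝ)) c =
      if b = b₀ then 1 else 0 := by
  split_ifs with h
  · exact Set.indicator_of_mem (h ▸ hc) _
  · exact Set.indicator_of_notMem
      (fun hc' => (pairwise_disjoint_dyadicCube_childIdx k j h).notMem_of_mem_left hc' hc) _

theorem measurableSet_dyadicCube (k : ℤ) (j : Fin n → ℤ) : MeasurableSet (dyadicCube n k j) := by
  have : dyadicCube n k j = ⋂ i, (fun x : EuclideanSpace ℝ (Fin n) => x i) ⁻¹'
      Set.Ico ((2:ℝ) ^ (-k) * j i) ((2:ℝ) ^ (-k) * (j i + 1)) := by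
    ext x
    simp [dyadicCube]
  rw [this]
  exact .iInter fun i =>
    ((measurable_pi_apply i).comp (WithLp.measurable_ofLp 2 _)) measurableSet_Ico

theorem measure_dyadicCube_ne_top (μ : Measure (EuclideanSpace ℝ (Fin n)))
    [IsFiniteMeasureOnCompacts μ] (k : ℤ) (j : Fin n → ℤ) : μ (dyadicCube n k j) ≠ ∞ := by
  let e := EuclideanSpace.equiv (Fin n) ℝ
  let box := Set.univ.pi fun i => Set.Icc ((2:ℝ) ^ (-k) * j i) ((2:ℝ) ^ (-k) * (j i + 1))
  have hbox : IsCompact (e.symm '' box) :=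
    (isCompact_univ_pi fun _ => isCompact_Icc).image e.symm.continuous
  have hsub : dyadicCube n k j ⊆ e.symm '' box :=
    fun x hx => ⟨e x, fun i _ => ⟨(hx i).1, (hx i).2.le⟩, e.symm_apply_apply x⟩
  exact ((measure_mono hsub).trans_lt hbox.measure_lt_top).ne

end Dyadic

theorem sum_mul_sub_mul_ite_div_sub_div {ι : Type*} [Fintype ι] [DecidableEq ι] (m A : ι → ℝ)
    (a M : ℝ) {i₀ : ι} (h₀ : m i₀ ≠ 0) (hmean : ∑ i, m i * (A i - a) = 0) :
    ∑ i, m i * (A i - a) * ((if i = i₀ then 1 else 0) / m i - 1 / M) = A i₀ - a := by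
  have hterm : ∀ i, m i * (A i - a) * ((if i = i₀ then 1 else 0) / m i - 1 / M) =
      (if i = i₀ then A i₀ - a else 0) - m i * (A i - a) / M := by
    intro i
    split_ifs with h
    · subst h
      field_simp
    · ring
  simp_rw [hterm, Finset.sum_sub_distrib, Finset.sum_ite_eq', Finset.mem_univ, if_true,
    ← Finset.sum_div, hmean, zero_div, sub_zero]

section Integrals

variable {n : ℕ} {μ : Measure (EuclideanSpace ℝ (Fin n))} {f : EuclideanSpace ℝ (Fin n) → ℝ}

theorem avg_eq_setIntegral_div (s : Set (EuclideanSpace ℝ (Fin n))) :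
    avg n μ s f = (∫ x in s, f x ∂μ) / (μ s).toReal := by
  unfold avg
  split_ifs with h
  · simp [h]
  · rfl

theorem toReal_measure_mul_avg {s : Set (EuclideanSpace ℝ (Fin n))} (hs : μ s ≠ ∞) :
    (μ s).toReal * avg n μ s f = ∫ x in s, f x ∂μ := by
  unfold avg
  split_ifs with h
  · simp [setIntegral_measure_zero f h]
  · exact mul_div_cancel₀ _ (ENNReal.toReal_ne_zero.mpr ⟨h, hs⟩)

theorem mul_indicator_one_div_eq (s : Set (EuclideanSpace ℝ (Fin n))) (c : ℝ) :
    (fun x => f x * (s.indicator (fun _ => (1:ℝ)) x / c)) = fun x => s.indicator f x / c := by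
  ext x
  simp_rw [mul_div_assoc', ← Set.indicator_mul_right, mul_one]

theorem integrable_mul_indicator_one_div (hf : Integrable f μ)
    {s : Set (EuclideanSpace ℝ (Fin n))} (hs : MeasurableSet s) (c : ℝ) :
    Integrable (fun x => f x * (s.indicator (fun _ => (1:ℝ)) x / c)) μ :=
  mul_indicator_one_div_eq s c ▸ (hf.indicator hs).div_const c

theorem integral_mul_indicator_one_div_toReal {s : Set (EuclideanSpace ℝ (Fin n))}
    (hs : MeasurableSet s) :
    ∫ x, f x * (s.indicator (fun _ => (1:ℝ)) x / (μ s).toReal) ∂μ = avg n μ s f := by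
  rw [mul_indicator_one_div_eq, integral_div, integral_indicator hs, avg_eq_setIntegral_div]

theorem integral_mul_haar (hf : Integrable f μ) (k : ℤ) (j : Fin n → ℤ) :
    ∫ y, f y * haar n μ k j y ∂μ =
      if μ (dyadicCube n k j) = 0 then 0 else
        √(μ (dyadicCube n k j)).toReal *
          (avg n μ (dyadicCube n k j) f - avg n μ (dyadicCube n (k - 1) (parentIdx j)) f) := by
  unfold haar
  split_ifs with h
  · simp
  simp_rw [fun y => mul_left_comm (f y) (√(μ (dyadicCube n k j)).toReal), mul_sub (f _)]
  rw [integral_const_mul,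
    integral_sub (integrable_mul_indicator_one_div hf (measurableSet_dyadicCube _ _) _)
      (integrable_mul_indicator_one_div hf (measurableSet_dyadicCube _ _) _),
    integral_mul_indicator_one_div_toReal (measurableSet_dyadicCube _ _),
    integral_mul_indicator_one_div_toReal (measurableSet_dyadicCube _ _)]

variable [IsFiniteMeasureOnCompacts μ]

theorem sum_toReal_measure_childIdx_mul_sub_avg (hf : Integrable f μ) (k : ℤ) (j : Fin n → ℤ) :
    ∑ b, (μ (dyadicCube n (k + 1) (childIdx j b))).toReal *
      (avg n μ (dyadicCube n (k + 1) (childIdx j b)) f - avg n μ (dyadicCube n k j) f) = 0 := by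
  have hmeasure : (μ (dyadicCube n k j)).toReal =
      ∑ b, (μ (dyadicCube n (k + 1) (childIdx j b))).toReal := by
    rw [← iUnion_dyadicCube_childIdx k j]
    exact measureReal_iUnion_fintype (pairwise_disjoint_dyadicCube_childIdx k j)
      (fun _ => measurableSet_dyadicCube _ _) (fun _ => measure_dyadicCube_ne_top μ _ _)
  have hintegral : ∫ x in dyadicCube n k j, f x ∂μ =
      ∑ b, ∫ x in dyadicCube n (k + 1) (childIdx j b), f x ∂μ := by
    rw [← iUnion_dyadicCube_childIdx k j]
    exact integral_iUnion_fintype (fun _ => measurableSet_dyadicCube _ _)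
      (pairwise_disjoint_dyadicCube_childIdx k j) (fun _ => hf.integrableOn)
  simp_rw [mul_sub, Finset.sum_sub_distrib,
    toReal_measure_mul_avg (measure_dyadicCube_ne_top μ _ _), ← Finset.sum_mul, ← hmeasure,
    ← hintegral, toReal_measure_mul_avg (measure_dyadicCube_ne_top μ _ _), sub_self]

end Integrals

section Expansion

variable {n : ℕ} {μ : Measure (EuclideanSpace ℝ (Fin n))} {f : EuclideanSpace ℝ (Fin n) → ℝ}
  {kR : ℤ} {jR : Fin n → ℤ} {b₀ : Fin n → Bool} {c : EuclideanSpace ℝ (Fin n)}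

theorem localDiff_eq_of_mem_childIdx (hc : c ∈ dyadicCube n (kR + 1) (childIdx jR b₀))
    (Q : Set (EuclideanSpace ℝ (Fin n))) (x : EuclideanSpace ℝ (Fin n)) :
    localDiff n μ kR jR c Q f x =
      (avg n μ (dyadicCube n (kR + 1) (childIdx jR b₀)) f - avg n μ (dyadicCube n kR jR) f) *
        Q.indicator (fun _ => (1:ℝ)) x := by
  simp only [localDiff, indicator_dyadicCube_childIdx_of_mem hc,
    Set.indicator_of_mem (dyadicCube_childIdx_subset kR jR b₀ hc), mul_ite, mul_one, mul_zero,
    Finset.sum_ite_eq', Finset.mem_univ, if_true]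
  ring

theorem sum_integral_mul_haar_mul_haarFull_of_mem_childIdx [IsFiniteMeasureOnCompacts μ]
    (hf : Integrable f μ) (hc : c ∈ dyadicCube n (kR + 1) (childIdx jR b₀))
    (h₀ : μ (dyadicCube n (kR + 1) (childIdx jR b₀)) ≠ 0)
    (Q : Set (EuclideanSpace ℝ (Fin n))) (x : EuclideanSpace ℝ (Fin n)) :
    ∑ b, (∫ y, f y * haar n μ (kR + 1) (childIdx jR b) y ∂μ) * haarFull n μ kR jR b c Q x =
      (avg n μ (dyadicCube n (kR + 1) (childIdx jR b₀)) f - avg n μ (dyadicCube n kR jR) f) *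
        Q.indicator (fun _ => (1:ℝ)) x := by
  set m : (Fin n → Bool) → ℝ := fun b => (μ (dyadicCube n (kR + 1) (childIdx jR b))).toReal
  set A : (Fin n → Bool) → ℝ := fun b => avg n μ (dyadicCube n (kR + 1) (childIdx jR b)) f
  have hterm : ∀ b,
      (∫ y, f y * haar n μ (kR + 1) (childIdx jR b) y ∂μ) * haarFull n μ kR jR b c Q x =
        m b * (A b - avg n μ (dyadicCube n kR jR) f) *
          ((if b = b₀ then 1 else 0) / m b - 1 / (μ (dyadicCube n kR jR)).toReal) *
            Q.indicator (fun _ => (1:ℝ)) x := by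
    intro b
    rw [integral_mul_haar hf, parentIdx_childIdx, add_sub_cancel_right]
    unfold haarFull
    rw [indicator_dyadicCube_childIdx_of_mem hc,
      Set.indicator_of_mem (dyadicCube_childIdx_subset kR jR b₀ hc)]
    by_cases h : μ (dyadicCube n (kR + 1) (childIdx jR b)) = 0
    · simp [m, h]
    · simp only [h, if_false]
      linear_combination (A b - avg n μ (dyadicCube n kR jR) f) *
        ((if b = b₀ then 1 else 0) / m b - 1 / (μ (dyadicCube n kR jR)).toReal) *
          Q.indicator (fun _ => (1:ℝ)) x * Real.mul_self_sqrt (ENNReal.toReal_nonneg (a := μ _))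
  rw [Finset.sum_congr rfl fun b _ => hterm b, ← Finset.sum_mul,
    sum_mul_sub_mul_ite_div_sub_div m A _ _
      (ENNReal.toReal_ne_zero.mpr ⟨h₀, measure_dyadicCube_ne_top μ _ _⟩)
      (sum_toReal_measure_childIdx_mul_sub_avg hf kR jR)]

end Expansion

theorem localDiff_eq_sum_haarFull_general (n : ℕ) (μ : Measure (EuclideanSpace ℝ (Fin n)))
    [IsFiniteMeasureOnCompacts μ]
    (kQ : ℤ) (jQ : Fin n → ℤ)
    (f : EuclideanSpace ℝ (Fin n) → ℝ) (hf : Integrable f μ)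
    (kJ : ℤ) (jJ : Fin n → ℤ)
    (hJ : μ (dyadicCube n kJ jJ) ≠ 0)
    (kR : ℤ) (jR : Fin n → ℤ) (hlen : kR < kJ) :
    ∀ x, localDiff n μ kR jR (dyadicCtr n kJ jJ) (dyadicCube n kQ jQ) f x =
      ∑ b : Fin n → Bool,
        (∫ y, f y * haar n μ (kR+1) (childIdx jR b) y ∂μ) *
          haarFull n μ kR jR b (dyadicCtr n kJ jJ) (dyadicCube n kQ jQ) x := by
  intro x
  by_cases hc : dyadicCtr n kJ jJ ∈ dyadicCube n kR jR
  · rw [← iUnion_dyadicCube_childIdx, Set.mem_iUnion] at hc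
    obtain ⟨b₀, hb₀⟩ := hc
    have hJ_sub : dyadicCube n kJ jJ ⊆ dyadicCube n (kR + 1) (childIdx jR b₀) :=
      dyadicCube_subset_of_mem hlen (dyadicCtr_mem kJ jJ) hb₀
    rw [localDiff_eq_of_mem_childIdx hb₀, sum_integral_mul_haar_mul_haarFull_of_mem_childIdx hf hb₀
      fun h => hJ (measure_mono_null hJ_sub h)]
  · have hc' : ∀ b, dyadicCtr n kJ jJ ∉ dyadicCube n (kR + 1) (childIdx jR b) :=
      fun b h => hc (dyadicCube_childIdx_subset kR jR b h)
    simp [localDiff, haarFull, Set.indicator_of_notMem hc, Set.indicator_of_notMem (hc' _)]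

/-- For `f` integrable, supported in `Q`, with mean zero, a dyadic cube
`J_p ⊂ Q` with `μ(J_p) ≠ 0` and center `c`, and a dyadic cube `R` with `ℓ(J_p) < ℓ(R)`,
the localized difference expands as
`Ĥ_R f = Σ_{I ∈ ch(R)} ⟨f, ψ_I⟩ ψ^{full}_{I,J_p}`. -/
theorem localDiff_eq_sum_haarFull (n : ℕ) (μ : Measure (EuclideanSpace ℝ (Fin n)))
    [IsFiniteMeasureOnCompacts μ]
    (kQ : ℤ) (jQ : Fin n → ℤ)
    (f : EuclideanSpace ℝ (Fin n) → ℝ) (hf : Integrable f μ)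
    (hsupp : Function.support f ⊆ dyadicCube n kQ jQ) (hmean : (∫ x, f x ∂μ) = 0)
    (kJ : ℤ) (jJ : Fin n → ℤ) (hJQ : dyadicCube n kJ jJ ⊆ dyadicCube n kQ jQ)
    (hJ : μ (dyadicCube n kJ jJ) ≠ 0)
    (kR : ℤ) (jR : Fin n → ℤ) (hlen : kR < kJ) :
    ∀ x, localDiff n μ kR jR (dyadicCtr n kJ jJ) (dyadicCube n kQ jQ) f x =
      ∑ b : Fin n → Bool,
        (∫ y, f y * haar n μ (kR+1) (childIdx jR b) y ∂μ) *
          haarFull n μ kR jR b (dyadicCtr n kJ jJ) (dyadicCube n kQ jQ) x :=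
  localDiff_eq_sum_haarFull_general n μ kQ jQ f hf kJ jJ hJ kR jR hlen

end
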